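/- arXiv:1405.5118 — 4 statements merged into one kernel-verified Lean document; each statement's English description precedes it below -/
import Mathlib

section
/- Let U ⊆ E be open in a finite-dimensional real normed space, L : U → (E →L[ℝ] E) a smooth field of operators, μ, ν : U → ℝ smooth functions, and X, Y smooth vector fields on U that are pointwise proper eigenvector fields: L(x)X(x) = μ(x)X(x) and L(x)Y(x) = ν(x)Y(x) for all x ∈ U. Then the Nijenhuis torsion satisfies T_L(X,Y) = (L − μI)(L − νI)[X,Y] + (μ − ν)·( X(ν)·Y + Y(μ)·X ), where I is the identity operator. (Paper: identity (3.7) specialized to proper eigenvector fields, i.e. Jordan chains of length one.) -/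
variable {E : Type*} [NormedAddCommGroup E] [NormedSpace ℝ E]

/-- Lie bracket of vector fields on a normed space:
`[X,Y](x) = (fderiv Y x)(X x) − (fderiv X x)(Y x)`. -/
noncomputable def lieBracket (X Y : E → E) : E → E :=
  fun x => fderiv ℝ Y x (X x) - fderiv ℝ X x (Y x)

/-- The vector field `LX : x ↦ L(x)(X(x))`. -/
noncomputable def opVec (L : E → (E →L[ℝ] E)) (X : E → E) : E → E :=
  fun x => L x (X x)

/-- Nijenhuis torsion of a field of operators:
`T_L(X,Y) = L²[X,Y] + [LX,LY] − L([X,LY] + [LX,Y])`. -/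
noncomputable def nijenhuisTorsion (L : E → (E →L[ℝ] E)) (X Y : E → E) : E → E :=
  fun x =>
    L x (L x (lieBracket X Y x)) + lieBracket (opVec L X) (opVec L Y) x
      - L x (lieBracket X (opVec L Y) x + lieBracket (opVec L X) Y x)

/-- Haantjes tensor of a field of operators:
`H_L(X,Y) = L²T_L(X,Y) + T_L(LX,LY) − L(T_L(X,LY) + T_L(LX,Y))`. -/
noncomputable def haantjesTensor (L : E → (E →L[ℝ] E)) (X Y : E → E) : E → E :=
  fun x =>
    L x (L x (nijenhuisTorsion L X Y x)) + nijenhuisTorsion L (opVec L X) (opVec L Y) x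
      - L x (nijenhuisTorsion L X (opVec L Y) x + nijenhuisTorsion L (opVec L X) Y x)

/-! The bracket of two eigenvector fields is computed by the Leibniz rule
`[fX, gY] = fg[X,Y] + f X(g) Y − g Y(f) X`; expanding the torsion with it, the terms in `[X,Y]`
assemble into `(L − μ)(L − ν)[X,Y]` and the remaining first-order terms into
`(μ − ν)(X(ν) Y + Y(μ) X)`. Only the germs of the fields at the point matter, so the
eigenvector equations are needed only near it. -/

open Filter Topology ContinuousLinearMap

section LieBracket

variable {X X' Y Y' : E → E} {f g : E → ℝ} {x : E}

theorem lieBracket_congr_of_eventuallyEq (hX : X =ᶠ[𝓝 x] X') (hY : Y =ᶠ[𝓝 x] Y') :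
    lieBracket X Y x = lieBracket X' Y' x := by
  simp only [lieBracket, hX.fderiv_eq, hY.fderiv_eq, hX.eq_of_nhds, hY.eq_of_nhds]

theorem lieBracket_smul_right (hf : DifferentiableAt ℝ f x) (hY : DifferentiableAt ℝ Y x) :
    lieBracket X (f • Y) x = f x • lieBracket X Y x + fderiv ℝ f x (X x) • Y x := by
  simp only [lieBracket, fderiv_smul hf hY, add_apply, smul_apply, smulRight_apply,
    Pi.smul_apply', map_smul, smul_sub]
  abel

theorem lieBracket_smul_left (hf : DifferentiableAt ℝ f x) (hX : DifferentiableAt ℝ X x) :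
    lieBracket (f • X) Y x = f x • lieBracket X Y x - fderiv ℝ f x (Y x) • X x := by
  simp only [lieBracket, fderiv_smul hf hX, add_apply, smul_apply, smulRight_apply, Pi.smul_apply',
    map_smul, smul_sub]
  abel

theorem lieBracket_smul_smul (hf : DifferentiableAt ℝ f x) (hg : DifferentiableAt ℝ g x)
    (hX : DifferentiableAt ℝ X x) (hY : DifferentiableAt ℝ Y x) :
    lieBracket (f • X) (g • Y) x
      = (f x * g x) • lieBracket X Y x + (f x * fderiv ℝ g x (X x)) • Y x
        - (g x * fderiv ℝ f x (Y x)) • X x := by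
  rw [lieBracket_smul_left hf hX, lieBracket_smul_right hg hY]
  simp only [Pi.smul_apply', map_smul, smul_add, smul_smul]
  module

end LieBracket

theorem nijenhuisTorsion_apply_of_eventually_eigen {L : E → (E →L[ℝ] E)} {μ ν : E → ℝ}
    {X Y : E → E} {x : E} (hμ : DifferentiableAt ℝ μ x) (hν : DifferentiableAt ℝ ν x)
    (hX : DifferentiableAt ℝ X x) (hY : DifferentiableAt ℝ Y x)
    (hXeig : opVec L X =ᶠ[𝓝 x] μ • X)
    (hYeig : opVec L Y =ᶠ[𝓝 x] ν • Y) :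
    nijenhuisTorsion L X Y x
      = (L x - μ x • (1 : E →L[ℝ] E)) ((L x - ν x • (1 : E →L[ℝ] E)) (lieBracket X Y x))
        + (μ x - ν x) • ((fderiv ℝ ν x (X x)) • Y x + (fderiv ℝ μ x (Y x)) • X x) := by
  have hLX : L x (X x) = μ x • X x := hXeig.eq_of_nhds
  have hLY : L x (Y x) = ν x • Y x := hYeig.eq_of_nhds
  rw [nijenhuisTorsion, lieBracket_congr_of_eventuallyEq hXeig hYeig,
    lieBracket_congr_of_eventuallyEq EventuallyEq.rfl hYeig,
    lieBracket_congr_of_eventuallyEq hXeig EventuallyEq.rfl, lieBracket_smul_smul hμ hν hX hY,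
    lieBracket_smul_right hν hY, lieBracket_smul_left hμ hX]
  simp only [sub_apply, smul_apply, one_apply_eq_self, map_add, map_sub, map_smul, hLX, hLY,
    smul_sub, smul_add, smul_smul]
  module

theorem nijenhuisTorsion_eigenvector_fields_general {E : Type*}
    [NormedAddCommGroup E] [NormedSpace ℝ E]
    (U : Set E) (hU : IsOpen U)
    (L : E → (E →L[ℝ] E))
    (μ ν : E → ℝ) (hμ : ContDiffOn ℝ (⊤ : ℕ∞) μ U) (hν : ContDiffOn ℝ (⊤ : ℕ∞) ν U)
    (X Y : E → E) (hX : ContDiffOn ℝ (⊤ : ℕ∞) X U) (hY : ContDiffOn ℝ (⊤ : ℕ∞) Y U)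
    (hXeig : ∀ x ∈ U, L x (X x) = μ x • X x)
    (hYeig : ∀ x ∈ U, L x (Y x) = ν x • Y x) :
    ∀ x ∈ U,
      nijenhuisTorsion L X Y x
        = (L x - μ x • (1 : E →L[ℝ] E)) ((L x - ν x • (1 : E →L[ℝ] E)) (lieBracket X Y x))
          + (μ x - ν x) • ((fderiv ℝ ν x (X x)) • Y x + (fderiv ℝ μ x (Y x)) • X x) := by
  intro x hx
  have hU_nhds : U ∈ 𝓝 x := hU.mem_nhds hx
  exact nijenhuisTorsion_apply_of_eventually_eigen
    ((hμ.differentiableOn (by simp)).differentiableAt hU_nhds)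
    ((hν.differentiableOn (by simp)).differentiableAt hU_nhds)
    ((hX.differentiableOn (by simp)).differentiableAt hU_nhds)
    ((hY.differentiableOn (by simp)).differentiableAt hU_nhds)
    (eventually_of_mem hU_nhds hXeig) (eventually_of_mem hU_nhds hYeig)

/-- Paper, identity (3.7) for proper eigenvector fields: if
`LX = μX` and `LY = νY` pointwise on `U`, then
`T_L(X,Y) = (L − μI)(L − νI)[X,Y] + (μ − ν)·(X(ν)·Y + Y(μ)·X)`. -/
theorem nijenhuisTorsion_eigenvector_fields {E : Type*}
    [NormedAddCommGroup E] [NormedSpace ℝ E] [FiniteDimensional ℝ E]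
    (U : Set E) (hU : IsOpen U)
    (L : E → (E →L[ℝ] E)) (hL : ContDiffOn ℝ (⊤ : ℕ∞) L U)
    (μ ν : E → ℝ) (hμ : ContDiffOn ℝ (⊤ : ℕ∞) μ U) (hν : ContDiffOn ℝ (⊤ : ℕ∞) ν U)
    (X Y : E → E) (hX : ContDiffOn ℝ (⊤ : ℕ∞) X U) (hY : ContDiffOn ℝ (⊤ : ℕ∞) Y U)
    (hXeig : ∀ x ∈ U, L x (X x) = μ x • X x)
    (hYeig : ∀ x ∈ U, L x (Y x) = ν x • Y x) :
    ∀ x ∈ U,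
      nijenhuisTorsion L X Y x
        = (L x - μ x • (1 : E →L[ℝ] E)) ((L x - ν x • (1 : E →L[ℝ] E)) (lieBracket X Y x))
          + (μ x - ν x) • ((fderiv ℝ ν x (X x)) • Y x + (fderiv ℝ μ x (Y x)) • X x) :=
  nijenhuisTorsion_eigenvector_fields_general U hU L μ ν hμ hν X Y hX hY hXeig hYeig
end

section
/- Let U ⊆ E be open in a finite-dimensional real normed space, L : U → (E →L[ℝ] E) a smooth field of operators, μ, ν : U → ℝ smooth functions, and X, Y smooth vector fields on U with L(x)X(x) = μ(x)X(x) and L(x)Y(x) = ν(x)Y(x) for all x ∈ U. Then the Haantjes tensor satisfies H_L(X,Y) = (L − μI)²(L − νI)²[X,Y]. (Paper: identity (3.8) specialized to proper eigenvector fields.) -/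
variable {E : Type*} [NormedAddCommGroup E] [NormedSpace ℝ E]

/-!
The Nijenhuis torsion is local and linear over differentiable functions in each argument,
so with `LX = μX` and `LY = νY` near `x` the four torsions in `H_L(X,Y)` are `T`, `μνT`,
`νT`, `μT` for `T = T_L(X,Y)`, whence `H_L(X,Y) = (L - μ)(L - ν)T`. The product rule for brackets gives
`T = (L - μ)(L - ν)[X,Y] + (μ - ν)(X(ν)Y + Y(μ)X)`, and `(L - μ)(L - ν)` kills `X` and `Y`.
-/

open Filter Topology

section LieBracket

variable {f g : E → ℝ} {A A' B B' : E → E} {x : E}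

lemma lieBracket_congr (hA : A =ᶠ[𝓝 x] A') (hB : B =ᶠ[𝓝 x] B') :
    lieBracket A B x = lieBracket A' B' x := by
  unfold lieBracket
  rw [hA.fderiv_eq, hB.fderiv_eq, hA.eq_of_nhds, hB.eq_of_nhds]

lemma lieBracket_smul_left_s7 (hf : DifferentiableAt ℝ f x) (hA : DifferentiableAt ℝ A x) :
    lieBracket (fun y => f y • A y) B x = f x • lieBracket A B x - fderiv ℝ f x (B x) • A x := by
  unfold lieBracket
  rw [fderiv_fun_smul hf hA]
  simp only [add_apply, smul_apply, ContinuousLinearMap.smulRight_apply, map_smul]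
  module

lemma lieBracket_smul_right_s7 (hg : DifferentiableAt ℝ g x) (hB : DifferentiableAt ℝ B x) :
    lieBracket A (fun y => g y • B y) x = g x • lieBracket A B x + fderiv ℝ g x (A x) • B x := by
  unfold lieBracket
  rw [fderiv_fun_smul hg hB]
  simp only [add_apply, smul_apply, ContinuousLinearMap.smulRight_apply, map_smul]
  module

end LieBracket

section NijenhuisTorsion

variable {L : E → (E →L[ℝ] E)} {f g : E → ℝ} {A A' B B' : E → E} {x : E}

lemma opVec_smul : opVec L (fun y => f y • A y) = fun y => f y • opVec L A y := by
  funext y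
  simp only [opVec, map_smul]

lemma opVec_congr (hA : A =ᶠ[𝓝 x] A') : opVec L A =ᶠ[𝓝 x] opVec L A' :=
  hA.mono fun y hy => by simp only [opVec, hy]

lemma nijenhuisTorsion_congr (hA : A =ᶠ[𝓝 x] A') (hB : B =ᶠ[𝓝 x] B') :
    nijenhuisTorsion L A B x = nijenhuisTorsion L A' B' x := by
  unfold nijenhuisTorsion
  rw [lieBracket_congr hA hB, lieBracket_congr (opVec_congr hA) (opVec_congr hB),
    lieBracket_congr hA (opVec_congr hB), lieBracket_congr (opVec_congr hA) hB]

lemma nijenhuisTorsion_smul_left (hf : DifferentiableAt ℝ f x) (hA : DifferentiableAt ℝ A x)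
    (hLA : DifferentiableAt ℝ (opVec L A) x) :
    nijenhuisTorsion L (fun y => f y • A y) B x = f x • nijenhuisTorsion L A B x := by
  unfold nijenhuisTorsion
  rw [opVec_smul, lieBracket_smul_left_s7 hf hA, lieBracket_smul_left_s7 hf hLA,
    lieBracket_smul_left_s7 hf hA, lieBracket_smul_left_s7 hf hLA]
  simp only [opVec, map_add, map_smul, map_sub]
  module

lemma nijenhuisTorsion_smul_right (hg : DifferentiableAt ℝ g x) (hB : DifferentiableAt ℝ B x)
    (hLB : DifferentiableAt ℝ (opVec L B) x) :
    nijenhuisTorsion L A (fun y => g y • B y) x = g x • nijenhuisTorsion L A B x := by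
  unfold nijenhuisTorsion
  rw [opVec_smul, lieBracket_smul_right_s7 hg hB, lieBracket_smul_right_s7 hg hLB,
    lieBracket_smul_right_s7 hg hLB, lieBracket_smul_right_s7 hg hB]
  simp only [opVec, map_add, map_smul]
  module

end NijenhuisTorsion

section Eigenfields

variable {L : E → (E →L[ℝ] E)} {μ ν : E → ℝ} {X Y : E → E} {x : E}

lemma nijenhuisTorsion_eq_of_eigenfields
    (hLX : opVec L X =ᶠ[𝓝 x] fun y => μ y • X y) (hLY : opVec L Y =ᶠ[𝓝 x] fun y => ν y • Y y)
    (hμ : DifferentiableAt ℝ μ x) (hν : DifferentiableAt ℝ ν x)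
    (hX : DifferentiableAt ℝ X x) (hY : DifferentiableAt ℝ Y x) :
    nijenhuisTorsion L X Y x
      = ((L x - μ x • 1) * (L x - ν x • 1)) (lieBracket X Y x)
        + (μ x - ν x) • (fderiv ℝ ν x (X x) • Y x + fderiv ℝ μ x (Y x) • X x) := by
  have hXx : L x (X x) = μ x • X x := hLX.eq_of_nhds
  have hYx : L x (Y x) = ν x • Y x := hLY.eq_of_nhds
  unfold nijenhuisTorsion
  rw [lieBracket_congr hLX hLY, lieBracket_congr EventuallyEq.rfl hLY,
    lieBracket_congr hLX EventuallyEq.rfl, lieBracket_smul_left_s7 hμ hX,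
    lieBracket_smul_left_s7 hμ hX, lieBracket_smul_right_s7 hν hY]
  simp only [mul_apply_eq_comp, sub_apply, smul_apply, one_apply_eq_self,
    map_add, map_sub, map_smul, hXx, hYx]
  module

lemma haantjesTensor_eq_of_eigenfields
    (hLX : opVec L X =ᶠ[𝓝 x] fun y => μ y • X y) (hLY : opVec L Y =ᶠ[𝓝 x] fun y => ν y • Y y)
    (hμ : DifferentiableAt ℝ μ x) (hν : DifferentiableAt ℝ ν x)
    (hX : DifferentiableAt ℝ X x) (hY : DifferentiableAt ℝ Y x) :
    haantjesTensor L X Y x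
      = ((L x - μ x • 1) * (L x - ν x • 1)) (nijenhuisTorsion L X Y x) := by
  have hLXd : DifferentiableAt ℝ (opVec L X) x := (hμ.smul hX).congr_of_eventuallyEq hLX
  have hLYd : DifferentiableAt ℝ (opVec L Y) x := (hν.smul hY).congr_of_eventuallyEq hLY
  have hT₁₁ : nijenhuisTorsion L (opVec L X) (opVec L Y) x
      = (μ x * ν x) • nijenhuisTorsion L X Y x := by
    rw [nijenhuisTorsion_congr hLX hLY, nijenhuisTorsion_smul_left hμ hX hLXd,
      nijenhuisTorsion_smul_right hν hY hLYd, smul_smul]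
  have hT₀₁ : nijenhuisTorsion L X (opVec L Y) x = ν x • nijenhuisTorsion L X Y x := by
    rw [nijenhuisTorsion_congr EventuallyEq.rfl hLY, nijenhuisTorsion_smul_right hν hY hLYd]
  have hT₁₀ : nijenhuisTorsion L (opVec L X) Y x = μ x • nijenhuisTorsion L X Y x := by
    rw [nijenhuisTorsion_congr hLX EventuallyEq.rfl, nijenhuisTorsion_smul_left hμ hX hLXd]
  unfold haantjesTensor
  rw [hT₁₁, hT₀₁, hT₁₀]
  simp only [mul_apply_eq_comp, sub_apply, smul_apply, one_apply_eq_self,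
    map_add, map_sub, map_smul]
  module

end Eigenfields

section Eigenvalues

variable {R K : Type*} [CommSemiring K] [Ring R] [Algebra K R]

lemma sub_smul_one_mul_sub_smul_one_sq (A : R) (a b : K) :
    ((A - a • 1) * (A - b • 1)) ^ 2 = (A - a • 1) ^ 2 * (A - b • 1) ^ 2 := by
  refine Commute.mul_pow ?_ 2
  exact ((Commute.refl A).sub_right ((Commute.one_right A).smul_right b)).sub_left
    ((Commute.one_left _).smul_left a)

lemma sub_smul_one_mul_sub_smul_one_apply_left {T : E →L[ℝ] E} {a : ℝ} (b : ℝ) {u : E}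
    (hu : T u = a • u) : ((T - a • 1) * (T - b • 1)) u = 0 := by
  simp only [mul_apply_eq_comp, sub_apply, smul_apply, one_apply_eq_self, map_sub, map_smul, hu]
  module

lemma sub_smul_one_mul_sub_smul_one_apply_right {T : E →L[ℝ] E} (a : ℝ) {b : ℝ} {v : E}
    (hv : T v = b • v) : ((T - a • 1) * (T - b • 1)) v = 0 := by
  simp only [mul_apply_eq_comp, sub_apply, smul_apply, one_apply_eq_self, hv, sub_self, map_zero]

end Eigenvalues

theorem haantjes_eigenvector_fields_general {E : Type*}
    [NormedAddCommGroup E] [NormedSpace ℝ E]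
    (U : Set E) (hU : IsOpen U)
    (L : E → (E →L[ℝ] E))
    (μ ν : E → ℝ) (hμ : ContDiffOn ℝ (⊤ : ℕ∞) μ U) (hν : ContDiffOn ℝ (⊤ : ℕ∞) ν U)
    (X Y : E → E) (hX : ContDiffOn ℝ (⊤ : ℕ∞) X U) (hY : ContDiffOn ℝ (⊤ : ℕ∞) Y U)
    (hXeig : ∀ x ∈ U, L x (X x) = μ x • X x)
    (hYeig : ∀ x ∈ U, L x (Y x) = ν x • Y x) :
    ∀ x ∈ U,
      haantjesTensor L X Y x
        = ((L x - μ x • (1 : E →L[ℝ] E)) ^ 2 * (L x - ν x • (1 : E →L[ℝ] E)) ^ 2)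
            (lieBracket X Y x) := by
  intro x hx
  have hU_nhds : U ∈ 𝓝 x := hU.mem_nhds hx
  have hLX : opVec L X =ᶠ[𝓝 x] fun y => μ y • X y := eventuallyEq_of_mem hU_nhds hXeig
  have hLY : opVec L Y =ᶠ[𝓝 x] fun y => ν y • Y y := eventuallyEq_of_mem hU_nhds hYeig
  have hμx := (hμ.differentiableOn (by simp)).differentiableAt hU_nhds
  have hνx := (hν.differentiableOn (by simp)).differentiableAt hU_nhds
  have hXx := (hX.differentiableOn (by simp)).differentiableAt hU_nhds
  have hYx := (hY.differentiableOn (by simp)).differentiableAt hU_nhds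
  rw [haantjesTensor_eq_of_eigenfields hLX hLY hμx hνx hXx hYx,
    nijenhuisTorsion_eq_of_eigenfields hLX hLY hμx hνx hXx hYx,
    map_add, map_smul, map_add, map_smul, map_smul,
    sub_smul_one_mul_sub_smul_one_apply_left _ (hXeig x hx),
    sub_smul_one_mul_sub_smul_one_apply_right _ (hYeig x hx)]
  simp only [smul_zero, add_zero]
  rw [← mul_apply_eq_comp, ← pow_two, sub_smul_one_mul_sub_smul_one_sq]

/-- Paper, identity (3.8) for proper eigenvector fields: if
`LX = μX` and `LY = νY` pointwise on `U`, then
`H_L(X,Y) = (L − μI)²(L − νI)²[X,Y]`. -/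
theorem haantjes_eigenvector_fields {E : Type*}
    [NormedAddCommGroup E] [NormedSpace ℝ E] [FiniteDimensional ℝ E]
    (U : Set E) (hU : IsOpen U)
    (L : E → (E →L[ℝ] E)) (hL : ContDiffOn ℝ (⊤ : ℕ∞) L U)
    (μ ν : E → ℝ) (hμ : ContDiffOn ℝ (⊤ : ℕ∞) μ U) (hν : ContDiffOn ℝ (⊤ : ℕ∞) ν U)
    (X Y : E → E) (hX : ContDiffOn ℝ (⊤ : ℕ∞) X U) (hY : ContDiffOn ℝ (⊤ : ℕ∞) Y U)
    (hXeig : ∀ x ∈ U, L x (X x) = μ x • X x)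
    (hYeig : ∀ x ∈ U, L x (Y x) = ν x • Y x) :
    ∀ x ∈ U,
      haantjesTensor L X Y x
        = ((L x - μ x • (1 : E →L[ℝ] E)) ^ 2 * (L x - ν x • (1 : E →L[ℝ] E)) ^ 2)
            (lieBracket X Y x) :=
  haantjes_eigenvector_fields_general U hU L μ ν hμ hν X Y hX hY hXeig hYeig
end

section
/- Let U ⊆ ℝ^{2n} be open with canonical coordinates (q₁,…,qₙ,p₁,…,pₙ), and let H = H₁, H₂,…,Hₙ : U → ℝ be smooth functions in separable involution (for each fixed k: ∂H_i/∂q_k·∂H_j/∂p_k − ∂H_i/∂p_k·∂H_j/∂q_k = 0), with ∂H/∂p_i nowhere zero on U for every i. Define l_i^{(α)} := (∂H_{α+1}/∂p_i)/(∂H/∂p_i) and the diagonal operator fields K_α := Σ_{i=1}^n l_i^{(α)}·( ∂/∂q_i ⊗ dq_i + ∂/∂p_i ⊗ dp_i ), α = 0,…,n−1. Then: (1) the chain relations hold, i.e. also ∂H_{α+1}/∂q_i = l_i^{(α)}·∂H/∂q_i for all i, so K_αᵀdH = dH_{α+1}; (2) each K_α satisfies K_αᵀJ = JK_α for the standard symplectic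 matrix J; (3) the K_α pairwise commute and, being diagonal fields of operators, have identically vanishing Haantjes tensor; and (4) if the functions are vertically independent, det(∂H_i/∂p_j) ≠ 0 on U, then K₀,…,K_{n−1} are pointwise linearly independent. (Paper: Theorem 7.13, converse part — every separable system belongs to a Lenard–Haantjes chain of the ωH structure (7.13).) -/
/-!
Separable involution at the index `k` says that the gradients of `H_{α+1}` and `H` in the
`(q_k, p_k)`-plane are parallel, which is the chain relation. `K_α` acts on each such plane as
multiplication by `l_k^{(α)}`, so it is diagonal with two equal blocks; hence it commutes with `J`
and with every `K_β`. For a diagonal field `L = diag(λ)` the `c`-th component of the Nijenhuis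
torsion is `Y_c · dλ_c((L - λ_c)X) - X_c · dλ_c((L - λ_c)Y)`; substituting this into the four
torsions of the Haantjes tensor, everything cancels. Finally the `p`-diagonal of `K_α` is the
`α`-th row of `(∂H_i/∂p_j) · diag(1/(∂H/∂p_j))`, a matrix of nonzero determinant.
-/

open Matrix

/-- Phase space `ℝ^{2n}` with coordinates indexed by `Fin n ⊕ Fin n`:
`Sum.inl i` is the `i`-th position-type coordinate and `Sum.inr i` the `i`-th
momentum-type coordinate. -/
abbrev Phase (n : ℕ) := (Fin n ⊕ Fin n) → ℝ

/-- Gradient (vector of partial derivatives) of a function on phase space. -/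
noncomputable def grad {n : ℕ} (F : Phase n → ℝ) (x : Phase n) : Phase n :=
  fun s => fderiv ℝ F x (Pi.single s 1)

/-- Canonical Poisson bracket
`{F,G} = Σᵢ (∂F/∂qᵢ·∂G/∂pᵢ − ∂F/∂pᵢ·∂G/∂qᵢ)`. -/
noncomputable def poisson {n : ℕ} (F G : Phase n → ℝ) (x : Phase n) : ℝ :=
  ∑ i : Fin n,
    (grad F x (Sum.inl i) * grad G x (Sum.inr i)
      - grad F x (Sum.inr i) * grad G x (Sum.inl i))

/-- The standard symplectic matrix `J = [[0, Iₙ], [−Iₙ, 0]]`. -/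
def symplJ (n : ℕ) : Matrix (Fin n ⊕ Fin n) (Fin n ⊕ Fin n) ℝ :=
  Matrix.fromBlocks 0 1 (-1) 0

/-- Lie bracket of vector fields on phase space. -/
noncomputable def lieBracketP {n : ℕ} (X Y : Phase n → Phase n) : Phase n → Phase n :=
  fun x => fderiv ℝ Y x (X x) - fderiv ℝ X x (Y x)

/-- The vector field `LX : x ↦ L(x)·X(x)` associated with a matrix-valued field `L`. -/
noncomputable def matVec {n : ℕ}
    (L : Phase n → Matrix (Fin n ⊕ Fin n) (Fin n ⊕ Fin n) ℝ)
    (X : Phase n → Phase n) : Phase n → Phase n :=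
  fun x => (L x) *ᵥ (X x)

/-- Nijenhuis torsion of a matrix-valued field of operators on phase space:
`T_L(X,Y) = L²[X,Y] + [LX,LY] − L([X,LY] + [LX,Y])`. -/
noncomputable def nijenhuisTorsionP {n : ℕ}
    (L : Phase n → Matrix (Fin n ⊕ Fin n) (Fin n ⊕ Fin n) ℝ)
    (X Y : Phase n → Phase n) : Phase n → Phase n :=
  fun x =>
    L x *ᵥ (L x *ᵥ lieBracketP X Y x) + lieBracketP (matVec L X) (matVec L Y) x
      - L x *ᵥ (lieBracketP X (matVec L Y) x + lieBracketP (matVec L X) Y x)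

/-- Haantjes tensor of a matrix-valued field of operators on phase space:
`H_L(X,Y) = L²T_L(X,Y) + T_L(LX,LY) − L(T_L(X,LY) + T_L(LX,Y))`. -/
noncomputable def haantjesTensorP {n : ℕ}
    (L : Phase n → Matrix (Fin n ⊕ Fin n) (Fin n ⊕ Fin n) ℝ)
    (X Y : Phase n → Phase n) : Phase n → Phase n :=
  fun x =>
    L x *ᵥ (L x *ᵥ nijenhuisTorsionP L X Y x)
      + nijenhuisTorsionP L (matVec L X) (matVec L Y) x
      - L x *ᵥ (nijenhuisTorsionP L X (matVec L Y) x
          + nijenhuisTorsionP L (matVec L X) Y x)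

/-- The diagonal Haantjes operators (7.13) of a separable system:
`K_α = Σᵢ (∂H_{α+1}/∂pᵢ)/(∂H/∂pᵢ) · (∂/∂qᵢ ⊗ dqᵢ + ∂/∂pᵢ ⊗ dpᵢ)`, where `Sum.inl i`
is `qᵢ` and `Sum.inr i` is `pᵢ`. -/
noncomputable def separableK {n : ℕ} [NeZero n] (H : Fin n → Phase n → ℝ)
    (α : Fin n) (x : Phase n) : Matrix (Fin n ⊕ Fin n) (Fin n ⊕ Fin n) ℝ :=
  Matrix.diagonal (fun s =>
    grad (H α) x (Sum.inr (Sum.elim id id s)) / grad (H 0) x (Sum.inr (Sum.elim id id s)))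

section DiagonalFields

variable {n : ℕ}

lemma lieBracketP_apply {A B : Phase n → Phase n} {x : Phase n}
    (hA : DifferentiableAt ℝ A x) (hB : DifferentiableAt ℝ B x) (c : Fin n ⊕ Fin n) :
    lieBracketP A B x c
      = fderiv ℝ (fun y => B y c) x (A x) - fderiv ℝ (fun y => A y c) x (B x) := by
  simp [lieBracketP, fderiv_apply hA c, fderiv_apply hB c]

lemma matVec_diagonal (d U : Phase n → Phase n) :
    matVec (fun y => diagonal (d y)) U = d * U := by
  funext y a
  simp [matVec, mulVec_diagonal]

lemma nijenhuisTorsionP_diagonal_apply {d U V : Phase n → Phase n} {x : Phase n}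
    (hd : DifferentiableAt ℝ d x) (hU : DifferentiableAt ℝ U x)
    (hV : DifferentiableAt ℝ V x) (c : Fin n ⊕ Fin n) :
    nijenhuisTorsionP (fun y => diagonal (d y)) U V x c =
      V x c * (fderiv ℝ (fun y => d y c) x ((d * U) x)
          - d x c * fderiv ℝ (fun y => d y c) x (U x))
      - U x c * (fderiv ℝ (fun y => d y c) x ((d * V) x)
          - d x c * fderiv ℝ (fun y => d y c) x (V x)) := by
  have hdc : DifferentiableAt ℝ (fun y => d y c) x := differentiableAt_pi.mp hd c
  have hUc : DifferentiableAt ℝ (fun y => U y c) x := differentiableAt_pi.mp hU c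
  have hVc : DifferentiableAt ℝ (fun y => V y c) x := differentiableAt_pi.mp hV c
  simp only [nijenhuisTorsionP, matVec_diagonal, Pi.add_apply, Pi.sub_apply, mulVec_diagonal,
    lieBracketP_apply hU hV, lieBracketP_apply (hd.mul hU) (hd.mul hV),
    lieBracketP_apply hU (hd.mul hV), lieBracketP_apply (hd.mul hU) hV, Pi.mul_apply,
    fderiv_fun_mul hdc hUc, fderiv_fun_mul hdc hVc, _root_.add_apply, _root_.smul_apply,
    smul_eq_mul]
  ring

lemma haantjesTensorP_diagonal {d X Y : Phase n → Phase n} {x : Phase n}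
    (hd : DifferentiableAt ℝ d x) (hX : DifferentiableAt ℝ X x)
    (hY : DifferentiableAt ℝ Y x) :
    haantjesTensorP (fun y => diagonal (d y)) X Y x = 0 := by
  funext c
  simp only [haantjesTensorP, matVec_diagonal, Pi.add_apply, Pi.sub_apply, mulVec_diagonal,
    nijenhuisTorsionP_diagonal_apply hd hX hY,
    nijenhuisTorsionP_diagonal_apply hd (hd.mul hX) (hd.mul hY),
    nijenhuisTorsionP_diagonal_apply hd hX (hd.mul hY),
    nijenhuisTorsionP_diagonal_apply hd (hd.mul hX) hY, Pi.mul_apply, Pi.zero_apply]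
  ring

end DiagonalFields

lemma fromBlocks_diagonal_transpose_mul_symplJ {n : ℕ} (e : Fin n → ℝ) :
    (fromBlocks (diagonal e) 0 0 (diagonal e))ᵀ * symplJ n
      = symplJ n * fromBlocks (diagonal e) 0 0 (diagonal e) := by
  simp only [symplJ, fromBlocks_transpose, fromBlocks_multiply, diagonal_transpose]
  simp

lemma differentiableAt_grad_apply {n : ℕ} {F : Phase n → ℝ} {U : Set (Phase n)}
    (hU : IsOpen U) (hF : ContDiffOn ℝ (⊤ : ℕ∞) F U) {x : Phase n} (hx : x ∈ U)
    (s : Fin n ⊕ Fin n) : DifferentiableAt ℝ (fun y => grad F y s) x := by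
  have hgrad : ContDiffOn ℝ (⊤ : ℕ∞) (fun y => grad F y s) U :=
    (hF.fderiv_of_isOpen hU (by simp)).clm_apply contDiffOn_const
  exact (hgrad.differentiableOn (by simp)).differentiableAt (hU.mem_nhds hx)

section SeparableSystem

variable {n : ℕ} [NeZero n] (H : Fin n → Phase n → ℝ)

/-- The paper's `l_i^{(α)}`, with `H α` in the role of `H_{α+1}`. -/
noncomputable def separableL (α : Fin n) (x : Phase n) (i : Fin n) : ℝ :=
  grad (H α) x (Sum.inr i) / grad (H 0) x (Sum.inr i)

lemma separableK_eq_diagonal (α : Fin n) (x : Phase n) :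
    separableK H α x = diagonal (Sum.elim (separableL H α x) (separableL H α x)) := by
  unfold separableK
  congr 1
  funext s
  cases s <;> rfl

lemma separableK_eq_fromBlocks (α : Fin n) (x : Phase n) :
    separableK H α x = fromBlocks (diagonal (separableL H α x)) 0 0
      (diagonal (separableL H α x)) := by
  rw [separableK_eq_diagonal, fromBlocks_diagonal]

lemma separableK_transpose_mulVec_grad {α : Fin n} {x : Phase n}
    (hchain : ∀ i, grad (H α) x (Sum.inl i) = separableL H α x i * grad (H 0) x (Sum.inl i))
    (hpne : ∀ i, grad (H 0) x (Sum.inr i) ≠ 0) :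
    (separableK H α x)ᵀ *ᵥ grad (H 0) x = grad (H α) x := by
  funext s
  rw [separableK_eq_diagonal, diagonal_transpose, mulVec_diagonal]
  cases s with
  | inl i => exact (hchain i).symm
  | inr i => exact div_mul_cancel₀ _ (hpne i)

lemma differentiableAt_separableL {U : Set (Phase n)} (hU : IsOpen U)
    (hH : ∀ j, ContDiffOn ℝ (⊤ : ℕ∞) (H j) U) {x : Phase n} (hx : x ∈ U)
    (hpne : ∀ i, grad (H 0) x (Sum.inr i) ≠ 0) (α : Fin n) :
    DifferentiableAt ℝ (separableL H α) x :=
  differentiableAt_pi.mpr fun i => by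
    simpa only [separableL, div_eq_mul_inv] using
      (differentiableAt_grad_apply hU (hH α) hx _).fun_mul
        ((differentiableAt_grad_apply hU (hH 0) hx _).fun_inv (hpne i))

lemma haantjesTensorP_separableK {U : Set (Phase n)} (hU : IsOpen U)
    (hH : ∀ j, ContDiffOn ℝ (⊤ : ℕ∞) (H j) U) {x : Phase n} (hx : x ∈ U)
    (hpne : ∀ i, grad (H 0) x (Sum.inr i) ≠ 0) (α : Fin n) {X Y : Phase n → Phase n}
    (hX : DifferentiableAt ℝ X x) (hY : DifferentiableAt ℝ Y x) :
    haantjesTensorP (separableK H α) X Y x = 0 :=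
  haantjesTensorP_diagonal (d := fun y s => separableL H α y (Sum.elim id id s))
    (differentiableAt_pi.mpr fun _ =>
      differentiableAt_pi.mp (differentiableAt_separableL H hU hH hx hpne α) _) hX hY

lemma linearIndependent_separableK {x : Phase n}
    (hdet : (of fun i j : Fin n => grad (H i) x (Sum.inr j)).det ≠ 0)
    (hpne : ∀ i, grad (H 0) x (Sum.inr i) ≠ 0) :
    LinearIndependent ℝ (fun α => separableK H α x) := by
  set M := of fun i j : Fin n => grad (H i) x (Sum.inr j)
  set D := diagonal fun j => (grad (H 0) x (Sum.inr j))⁻¹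
  have hdet' : (M * D).det ≠ 0 := by
    rw [det_mul, det_diagonal]
    exact mul_ne_zero hdet (Finset.prod_ne_zero_iff.mpr fun j _ => inv_ne_zero (hpne j))
  set diagP := (LinearMap.funLeft ℝ ℝ Sum.inr).comp (diagLinearMap (Fin n ⊕ Fin n) ℝ ℝ)
  refine .of_comp diagP ?_
  have hdiag : (fun α => (M * D) α) = diagP ∘ fun α => separableK H α x := by
    funext α j
    simp [diagP, separableK_eq_diagonal, separableL, M, D, mul_diagonal, div_eq_mul_inv]
  exact hdiag ▸ linearIndependent_rows_of_det_ne_zero hdet'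

end SeparableSystem

/-- Paper, Theorem 7.13, converse part: if `H = H₁,…,Hₙ` are in
separable involution in the canonical coordinates `(q,p)` and `∂H/∂pᵢ` is nowhere zero,
then with `l_i^{(α)} = (∂H_{α+1}/∂pᵢ)/(∂H/∂pᵢ)` and the diagonal operators `K_α` above:
(1) the chain relations `K_αᵀdH = dH_{α+1}` hold; (2) each `K_α` is compatible with the
canonical symplectic structure; (3) the `K_α` pairwise commute and have identically
vanishing Haantjes tensor; (4) if `det(∂H_i/∂p_j) ≠ 0` on `U`, the `K_α` are pointwise
linearly independent. -/
theorem separable_haantjes_structure {n : ℕ} [NeZero n]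
    (U : Set (Phase n)) (hU : IsOpen U)
    (H : Fin n → Phase n → ℝ)
    (hH : ∀ j, ContDiffOn ℝ (⊤ : ℕ∞) (H j) U)
    (hsep : ∀ i j k, ∀ x ∈ U,
      grad (H i) x (Sum.inl k) * grad (H j) x (Sum.inr k)
        - grad (H i) x (Sum.inr k) * grad (H j) x (Sum.inl k) = 0)
    (hpne : ∀ x ∈ U, ∀ i, grad (H 0) x (Sum.inr i) ≠ 0) :
    ((∀ α i, ∀ x ∈ U,
        grad (H α) x (Sum.inl i)
          = (grad (H α) x (Sum.inr i) / grad (H 0) x (Sum.inr i))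
              * grad (H 0) x (Sum.inl i)) ∧
      ∀ α, ∀ x ∈ U, (separableK H α x)ᵀ *ᵥ grad (H 0) x = grad (H α) x) ∧
    (∀ α, ∀ x ∈ U, (separableK H α x)ᵀ * symplJ n = symplJ n * separableK H α x) ∧
    ((∀ α β, ∀ x ∈ U, separableK H α x * separableK H β x
        = separableK H β x * separableK H α x) ∧
      ∀ α (X Y : Phase n → Phase n),
        ContDiffOn ℝ (⊤ : ℕ∞) X U → ContDiffOn ℝ (⊤ : ℕ∞) Y U →
        ∀ x ∈ U, haantjesTensorP (separableK H α) X Y x = 0) ∧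
    ((∀ x ∈ U, (Matrix.of fun i j : Fin n => grad (H i) x (Sum.inr j)).det ≠ 0) →
      ∀ x ∈ U, LinearIndependent ℝ (fun α => separableK H α x)) := by
  have chain : ∀ α i, ∀ x ∈ U, grad (H α) x (Sum.inl i)
      = (grad (H α) x (Sum.inr i) / grad (H 0) x (Sum.inr i)) * grad (H 0) x (Sum.inl i) := by
    intro α i x hx
    rw [div_mul_eq_mul_div, eq_div_iff (hpne x hx i)]
    linear_combination hsep α 0 i x hx
  have hdiff {F : Phase n → Phase n} (hF : ContDiffOn ℝ (⊤ : ℕ∞) F U) {x : Phase n}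
      (hx : x ∈ U) : DifferentiableAt ℝ F x :=
    (hF.differentiableOn (by simp)).differentiableAt (hU.mem_nhds hx)
  refine ⟨⟨chain, fun α x hx =>
    separableK_transpose_mulVec_grad H (chain α · x hx) (hpne x hx)⟩, ?_, ⟨?_, ?_⟩, ?_⟩
  · intro α x _
    rw [separableK_eq_fromBlocks]
    exact fromBlocks_diagonal_transpose_mul_symplJ _
  · intro α β x _
    simp only [separableK_eq_diagonal]
    exact (commute_diagonal _ _).eq
  · exact fun α X Y hX hY x hx =>
      haantjesTensorP_separableK H hU hH hx (hpne x hx) α (hdiff hX hx) (hdiff hY hx)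
  · exact fun hdet x hx => linearIndependent_separableK H (hdet x hx) (hpne x hx)
end

section
/- Let f_k, g_k : ℝ² → ℝ, k = 1,…,n, be smooth, and on the open subset U of ℝ^{2n} (coordinates (q₁,…,qₙ,p₁,…,pₙ)) where G(q,p) := Σ_{k=1}^n g_k(q_k,p_k) ≠ 0, define the Gantmacher Hamiltonian H := (Σ_{k=1}^n f_k(q_k,p_k)) / G and the functions I_j := f_j(q_j,p_j) − H·g_j(q_j,p_j) for j = 1,…,n−1. Define the operator fields K_j := −g_j(q_j,p_j)·I + G·Π_j, where Π_j := ∂/∂q_j ⊗ dq_j + ∂/∂p_j ⊗ dp_j and I is the identity operator. Then: (1) the Lenard–Haantjes chain relations hold, K_jᵀ dH = dI_j for j = 1,…,n−1; (2) each K_j satisfies K_jᵀJ = JK_j for the standard symplectic matrix J, and the K_j pairwise commute; and consequently (3) the functions are in involution: {H, I_j} = 0 and {I_j, I_k} = 0 for the canonical Poisson bracket. (Paper: Proposition on Gantmacher systems in Section 7.4; the spectrum of K_j is {−g_j, G − g_j}.) -/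
open Matrix

/-- `G(q,p) = Σ_k g_k(q_k,p_k)`. -/
noncomputable def gantG {n : ℕ} (g : Fin n → ℝ × ℝ → ℝ) (x : Phase n) : ℝ :=
  ∑ k : Fin n, g k (x (Sum.inl k), x (Sum.inr k))

/-- The Gantmacher Hamiltonian `H = (Σ_k f_k(q_k,p_k)) / (Σ_k g_k(q_k,p_k))`. -/
noncomputable def gantH {n : ℕ} (f g : Fin n → ℝ × ℝ → ℝ) (x : Phase n) : ℝ :=
  (∑ k : Fin n, f k (x (Sum.inl k), x (Sum.inr k))) / gantG g x

/-- The Gantmacher integrals of motion `I_j = f_j(q_j,p_j) − H·g_j(q_j,p_j)`. -/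
noncomputable def gantI {n : ℕ} (f g : Fin n → ℝ × ℝ → ℝ) (j : Fin n) (x : Phase n) : ℝ :=
  f j (x (Sum.inl j), x (Sum.inr j)) - gantH f g x * g j (x (Sum.inl j), x (Sum.inr j))

/-- The projector `Π_j = ∂/∂q_j ⊗ dq_j + ∂/∂p_j ⊗ dp_j` onto the `(q_j,p_j)` plane. -/
def gantProj {n : ℕ} (j : Fin n) : Matrix (Fin n ⊕ Fin n) (Fin n ⊕ Fin n) ℝ :=
  Matrix.diagonal (fun s => if Sum.elim id id s = j then 1 else 0)

/-- The Gantmacher Haantjes operators `K_j = −g_j·I + G·Π_j`. -/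
noncomputable def gantK {n : ℕ} (g : Fin n → ℝ × ℝ → ℝ) (j : Fin n) (x : Phase n) :
    Matrix (Fin n ⊕ Fin n) (Fin n ⊕ Fin n) ℝ :=
  (-(g j (x (Sum.inl j), x (Sum.inr j)))) • (1 : Matrix (Fin n ⊕ Fin n) (Fin n ⊕ Fin n) ℝ)
    + gantG g x • gantProj j

/-!
The gradient of `I_j` is the gradient of `H` rescaled coordinatewise by the diagonal of `K_j`:
differentiating `H·G = Σ f_k` in a coordinate of the `j`-th plane gives
`G ∂H = ∂f_j − H ∂g_j`, so `∂I_j = ∂f_j − H ∂g_j − g_j ∂H = (G − g_j) ∂H` there, while off that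
plane only the term `−g_j ∂H` survives. Since the `K_j` are diagonal with equal entries on `q_i`
and `p_i`, they commute and `JK_j` is skew-symmetric. Involution then holds for any Lenard–Haantjes
chain: writing `{F, G} = dF·J dG`, the bracket `{I_j, I_k} = dH·K_j J K_kᵀ dH = dH·K_j K_k J dH`
vanishes because `K_j K_k J` is skew-symmetric, and `{H, I_j}` is the case `K = 1`.
-/

section Calculus

variable {n : ℕ}

lemma grad_sub {F G : Phase n → ℝ} {x : Phase n} (hF : DifferentiableAt ℝ F x)
    (hG : DifferentiableAt ℝ G x) : grad (F - G) x = grad F x - grad G x := by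
  funext s
  simp [grad, fderiv_sub hF hG]

lemma grad_mul {F G : Phase n → ℝ} {x : Phase n} (hF : DifferentiableAt ℝ F x)
    (hG : DifferentiableAt ℝ G x) : grad (F * G) x = F x • grad G x + G x • grad F x := by
  funext s
  simp [grad, fderiv_mul hF hG]

def planeFun (φ : ℝ × ℝ → ℝ) (k : Fin n) (y : Phase n) : ℝ :=
  φ (y (Sum.inl k), y (Sum.inr k))

noncomputable def planeProj (k : Fin n) : Phase n →L[ℝ] ℝ × ℝ :=
  (ContinuousLinearMap.proj (Sum.inl k)).prod (ContinuousLinearMap.proj (Sum.inr k))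

lemma planeFun_eq_comp (φ : ℝ × ℝ → ℝ) (k : Fin n) : planeFun φ k = φ ∘ planeProj k := rfl

lemma planeProj_single_of_ne {s : Fin n ⊕ Fin n} {k : Fin n} (h : Sum.elim id id s ≠ k) :
    planeProj k (Pi.single s 1) = 0 := by
  cases s <;> simp_all [planeProj, eq_comm, Prod.mk_zero_zero]

variable {φ : ℝ × ℝ → ℝ}

lemma Differentiable.planeFun (hφ : Differentiable ℝ φ) (k : Fin n) :
    Differentiable ℝ (planeFun φ k) :=
  hφ.comp (planeProj k).differentiable

lemma grad_planeFun_of_ne (hφ : Differentiable ℝ φ) (x : Phase n) {s : Fin n ⊕ Fin n}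
    {k : Fin n} (h : Sum.elim id id s ≠ k) : grad (planeFun φ k) x s = 0 := by
  rw [grad, planeFun_eq_comp, fderiv_comp x (hφ _) (planeProj k).differentiableAt]
  simp [planeProj_single_of_ne h]

lemma grad_sum_planeFun {φ : Fin n → ℝ × ℝ → ℝ} (hφ : ∀ k, Differentiable ℝ (φ k))
    (x : Phase n) (s : Fin n ⊕ Fin n) :
    grad (∑ k, planeFun (φ k) k) x s =
      grad (planeFun (φ (Sum.elim id id s)) (Sum.elim id id s)) x s := by
  rw [grad, fderiv_sum fun k _ => ((hφ k).planeFun k).differentiableAt,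
    _root_.sum_apply, Finset.sum_eq_single (Sum.elim id id s)]
  · rfl
  · exact fun k _ hk => grad_planeFun_of_ne (hφ k) x (Ne.symm hk)
  · simp

end Calculus

section Symplectic

variable {n : ℕ}

lemma symplJ_transpose : (symplJ n)ᵀ = -symplJ n := by
  simp [symplJ, fromBlocks_transpose, fromBlocks_neg]

lemma symplJ_mul_self : symplJ n * symplJ n = -1 := by
  simp [symplJ, fromBlocks_multiply, ← fromBlocks_one, fromBlocks_neg]

lemma symplJ_mul_transpose {K : Matrix (Fin n ⊕ Fin n) (Fin n ⊕ Fin n) ℝ}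
    (hK : Kᵀ * symplJ n = symplJ n * K) : symplJ n * Kᵀ = K * symplJ n := by
  have := congr_arg (fun M => symplJ n * M * symplJ n) hK
  simp only [Matrix.mul_assoc, symplJ_mul_self] at this
  simpa [← Matrix.mul_assoc, symplJ_mul_self] using this

lemma diagonal_transpose_mul_symplJ {d : Fin n ⊕ Fin n → ℝ}
    (hd : ∀ i, d (Sum.inl i) = d (Sum.inr i)) :
    (diagonal d)ᵀ * symplJ n = symplJ n * diagonal d := by
  ext (i | i) (i' | i') <;>
    simp [symplJ, diagonal_transpose, diagonal_mul, mul_diagonal, one_apply, hd] <;>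
    split_ifs with h <;> simp [h]

lemma dotProduct_mulVec_self_eq_zero {ι R : Type*} [Fintype ι] [CommRing R]
    [IsAddTorsionFree R] {A : Matrix ι ι R} (hA : Aᵀ = -A) (u : ι → R) :
    u ⬝ᵥ (A *ᵥ u) = 0 := by
  rw [← self_eq_neg]
  calc u ⬝ᵥ (A *ᵥ u) = (Aᵀ *ᵥ u) ⬝ᵥ u := by rw [dotProduct_mulVec, mulVec_transpose]
    _ = -(u ⬝ᵥ (A *ᵥ u)) := by rw [hA, neg_mulVec, neg_dotProduct, dotProduct_comm]

lemma poisson_eq_dotProduct (F G : Phase n → ℝ) (x : Phase n) :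
    poisson F G x = grad F x ⬝ᵥ (symplJ n *ᵥ grad G x) := by
  simp [poisson, dotProduct, symplJ, Fintype.sum_sum_type, mulVec, fromBlocks, one_apply,
    sub_eq_add_neg, Finset.sum_add_distrib]

lemma poisson_eq_zero_of_lenardHaantjes_chain {H I I' : Phase n → ℝ} {x : Phase n}
    {K K' : Matrix (Fin n ⊕ Fin n) (Fin n ⊕ Fin n) ℝ}
    (hI : grad I x = Kᵀ *ᵥ grad H x) (hI' : grad I' x = K'ᵀ *ᵥ grad H x)
    (hK : Kᵀ * symplJ n = symplJ n * K) (hK' : K'ᵀ * symplJ n = symplJ n * K')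
    (hKK' : K * K' = K' * K) : poisson I I' x = 0 := by
  have hM : K * symplJ n * K'ᵀ = K * K' * symplJ n := by
    rw [Matrix.mul_assoc, symplJ_mul_transpose hK', Matrix.mul_assoc]
  have hskew : (K * K' * symplJ n)ᵀ = -(K * K' * symplJ n) := by
    rw [transpose_mul, transpose_mul, symplJ_transpose, Matrix.neg_mul, ← Matrix.mul_assoc,
      symplJ_mul_transpose hK', Matrix.mul_assoc K', symplJ_mul_transpose hK,
      ← Matrix.mul_assoc K', ← hKK']
  rw [poisson_eq_dotProduct, hI, hI', mulVec_mulVec, mulVec_transpose, ← dotProduct_mulVec,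
    mulVec_mulVec, ← Matrix.mul_assoc, hM]
  exact dotProduct_mulVec_self_eq_zero hskew _

end Symplectic

section Gantmacher

variable {n : ℕ} {f g : Fin n → ℝ × ℝ → ℝ}

noncomputable def gantKDiag (g : Fin n → ℝ × ℝ → ℝ) (j : Fin n) (x : Phase n)
    (s : Fin n ⊕ Fin n) : ℝ :=
  (if Sum.elim id id s = j then gantG g x else 0) - g j (x (Sum.inl j), x (Sum.inr j))

lemma gantK_eq_diagonal (g : Fin n → ℝ × ℝ → ℝ) (j : Fin n) (x : Phase n) :
    gantK g j x = diagonal (gantKDiag g j x) := by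
  ext s t
  by_cases h : s = t <;> simp [gantK, gantProj, gantKDiag, one_apply, h, neg_add_eq_sub]

lemma gantG_eq_sum (g : Fin n → ℝ × ℝ → ℝ) : gantG g = ∑ k, planeFun (g k) k := by
  funext x
  simp [gantG, planeFun]

lemma gantI_eq_planeFun (f g : Fin n → ℝ × ℝ → ℝ) (j : Fin n) :
    gantI f g j = planeFun (f j) j - gantH f g * planeFun (g j) j := rfl

lemma differentiable_gantG (hg : ∀ k, Differentiable ℝ (g k)) : Differentiable ℝ (gantG g) := by
  rw [gantG_eq_sum]
  exact Differentiable.sum fun k _ => (hg k).planeFun k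

lemma grad_gantG (hg : ∀ k, Differentiable ℝ (g k)) (x : Phase n) (s : Fin n ⊕ Fin n) :
    grad (gantG g) x s = grad (planeFun (g (Sum.elim id id s)) (Sum.elim id id s)) x s := by
  rw [gantG_eq_sum]
  exact grad_sum_planeFun hg x s

variable (hf : ∀ k, Differentiable ℝ (f k)) (hg : ∀ k, Differentiable ℝ (g k))
include hf hg

lemma differentiableAt_gantH {x : Phase n} (hx : gantG g x ≠ 0) :
    DifferentiableAt ℝ (gantH f g) x := by
  have hF : Differentiable ℝ (∑ k, planeFun (f k) k) :=
    Differentiable.sum fun k _ => (hf k).planeFun k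
  have hH : gantH f g = fun y => (∑ k, planeFun (f k) k) y * (gantG g y)⁻¹ := by
    funext y
    simp [gantH, planeFun, div_eq_mul_inv]
  rw [hH]
  exact (hF x).mul ((differentiable_gantG hg x).inv hx)

lemma gantG_mul_grad_gantH {x : Phase n} (hx : gantG g x ≠ 0) (s : Fin n ⊕ Fin n) :
    gantG g x * grad (gantH f g) x s =
      grad (planeFun (f (Sum.elim id id s)) (Sum.elim id id s)) x s
        - gantH f g x * grad (planeFun (g (Sum.elim id id s)) (Sum.elim id id s)) x s := by
  have hG := differentiable_gantG hg
  have hHG : gantH f g * gantG g =ᶠ[nhds x] ∑ k, planeFun (f k) k := by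
    filter_upwards [(hG x).continuousAt.eventually_ne hx] with y hy
    simp [gantH, planeFun, div_mul_cancel₀ _ hy]
  have hgrad : grad (gantH f g * gantG g) x s = grad (∑ k, planeFun (f k) k) x s := by
    simp only [grad, hHG.fderiv_eq]
  rw [grad_mul (differentiableAt_gantH hf hg hx) (hG x), grad_sum_planeFun hf] at hgrad
  simp only [Pi.add_apply, Pi.smul_apply, smul_eq_mul, grad_gantG hg] at hgrad
  linarith

lemma grad_gantI {x : Phase n} (hx : gantG g x ≠ 0) (j : Fin n) :
    grad (gantI f g j) x = gantKDiag g j x * grad (gantH f g) x := by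
  have hH := differentiableAt_gantH hf hg hx
  funext s
  rw [gantI_eq_planeFun, grad_sub ((hf j).planeFun j x) (hH.mul ((hg j).planeFun j x)),
    grad_mul hH ((hg j).planeFun j x)]
  by_cases h : Sum.elim id id s = j
  · subst h
    have := gantG_mul_grad_gantH hf hg hx s
    simp only [Pi.sub_apply, Pi.add_apply, Pi.smul_apply, smul_eq_mul, Pi.mul_apply, gantKDiag,
      if_true, planeFun] at this ⊢
    linarith
  · simp [grad_planeFun_of_ne (hf j) x h, grad_planeFun_of_ne (hg j) x h, gantKDiag, h, planeFun]

end Gantmacher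

/-- Paper, Section 7.4, Gantmacher systems: on the open set where
`G ≠ 0`: (1) the Lenard–Haantjes chain relations `K_jᵀdH = dI_j` hold; (2) each `K_j` is
compatible with the canonical symplectic structure and the `K_j` pairwise commute;
consequently (3) `{H, I_j} = 0` and `{I_j, I_k} = 0`. -/
theorem gantmacher_haantjes_structure {n : ℕ} (f g : Fin n → ℝ × ℝ → ℝ)
    (hf : ∀ k, ContDiff ℝ (⊤ : ℕ∞) (f k)) (hg : ∀ k, ContDiff ℝ (⊤ : ℕ∞) (g k)) :
    (∀ j : Fin n, ∀ x ∈ {x : Phase n | gantG g x ≠ 0},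
      (gantK g j x)ᵀ *ᵥ grad (gantH f g) x = grad (gantI f g j) x) ∧
    (∀ j : Fin n, ∀ x ∈ {x : Phase n | gantG g x ≠ 0},
      (gantK g j x)ᵀ * symplJ n = symplJ n * gantK g j x) ∧
    (∀ j k : Fin n, ∀ x ∈ {x : Phase n | gantG g x ≠ 0},
      gantK g j x * gantK g k x = gantK g k x * gantK g j x) ∧
    (∀ j : Fin n, ∀ x ∈ {x : Phase n | gantG g x ≠ 0},
      poisson (gantH f g) (gantI f g j) x = 0) ∧
    (∀ j k : Fin n, ∀ x ∈ {x : Phase n | gantG g x ≠ 0},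
      poisson (gantI f g j) (gantI f g k) x = 0) := by
  have hf' k : Differentiable ℝ (f k) := (hf k).differentiable (by simp)
  have hg' k : Differentiable ℝ (g k) := (hg k).differentiable (by simp)
  have chain : ∀ j, ∀ x ∈ {x : Phase n | gantG g x ≠ 0},
      (gantK g j x)ᵀ *ᵥ grad (gantH f g) x = grad (gantI f g j) x := by
    intro j x hx
    funext s
    rw [grad_gantI hf' hg' hx, gantK_eq_diagonal, diagonal_transpose, mulVec_diagonal, Pi.mul_apply]
  have compatible j x : (gantK g j x)ᵀ * symplJ n = symplJ n * gantK g j x := by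
    rw [gantK_eq_diagonal]
    exact diagonal_transpose_mul_symplJ fun _ => rfl
  have commute j k x : gantK g j x * gantK g k x = gantK g k x * gantK g j x := by
    simp only [gantK_eq_diagonal]
    exact commute_diagonal _ _
  refine ⟨chain, fun j x _ => compatible j x, fun j k x _ => commute j k x, ?_, ?_⟩
  · intro j x hx
    exact poisson_eq_zero_of_lenardHaantjes_chain (K := 1) (by simp) (chain j x hx).symm (by simp)
      (compatible j x) (by simp)
  · intro j k x hx
    exact poisson_eq_zero_of_lenardHaantjes_chain (chain j x hx).symm (chain k x hx).symm
      (compatible j x) (compatible k x) (commute j k x)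
end
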